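/- Let T be a pseudotree that either contains an internal vertex or has at least two roots. Then T can be decomposed into two pseudotrees T_a and T_b that are disjoint from each other and whose edge sets partition E(T) (i.e., E(T_a) ∪ E(T_b) = E(T) and E(T_a) ∩ E(T_b) = ∅). Moreover, if T is disjoint from some pseudotree T', then each of T_a and T_b is also disjoint from T'. -/

import Mathlib

/-- A finite simple directed graph: a finite vertex set, a finite set of directed
edges (ordered pairs) between vertices, with no self-loops. Since `edges` is a
`Finset`, there are no repeated edges. -/
structure FinDigraph (V : Type*) [DecidableEq V] where
  verts : Finset V
  edges : Finset (V × V)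
  mem_fst : ∀ e ∈ edges, e.1 ∈ verts
  mem_snd : ∀ e ∈ edges, e.2 ∈ verts
  no_loops : ∀ e ∈ edges, e.1 ≠ e.2

namespace FinDigraph

variable {V : Type*} [DecidableEq V]

/-- Adjacency in the underlying undirected graph. -/
def Adj (G : FinDigraph V) (a b : V) : Prop := (a, b) ∈ G.edges ∨ (b, a) ∈ G.edges

/-- `G` is connected if its underlying undirected graph is connected. -/
def Connected (G : FinDigraph V) : Prop :=
  G.verts.Nonempty ∧ ∀ u ∈ G.verts, ∀ v ∈ G.verts, Relation.ReflTransGen G.Adj u v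

/-- The set of in-neighbors of `j`. -/
def inNbrs (G : FinDigraph V) (j : V) : Finset V := G.verts.filter fun i => (i, j) ∈ G.edges

/-- The set of out-neighbors of `j`. -/
def outNbrs (G : FinDigraph V) (j : V) : Finset V := G.verts.filter fun i => (j, i) ∈ G.edges

/-- The sinks of `G`: vertices without out-neighbors. -/
def sinks (G : FinDigraph V) : Finset V := G.verts.filter fun j => G.outNbrs j = ∅

/-- The sources of `G`: vertices without in-neighbors. -/
def sources (G : FinDigraph V) : Finset V := G.verts.filter fun j => G.inNbrs j = ∅

def IsSubgraph (H G : FinDigraph V) : Prop := H.verts ⊆ G.verts ∧ H.edges ⊆ G.edges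

/-- A (directed) pseudotree: a connected simple directed graph with at least two
vertices in which every vertex has at most one in-neighbor. -/
def IsPseudotree (T : FinDigraph V) : Prop :=
  T.Connected ∧ 2 ≤ T.verts.card ∧ ∀ j ∈ T.verts, (T.inNbrs j).card ≤ 1

/-- An anti-pseudotree: a connected simple directed graph with at least two
vertices in which every vertex has at most one out-neighbor. -/
def IsAntiPseudotree (T : FinDigraph V) : Prop :=
  T.Connected ∧ 2 ≤ T.verts.card ∧ ∀ j ∈ T.verts, (T.outNbrs j).card ≤ 1

/-- `l` is the list of vertices visited by a directed path from `u` to `v`: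
consecutive vertices are joined by directed edges, and no vertex repeats. -/
def IsPath (G : FinDigraph V) (u v : V) (l : List V) : Prop :=
  l ≠ [] ∧ l.Chain' (fun a b => (a, b) ∈ G.edges) ∧ l.Nodup ∧
    l.head? = some u ∧ l.getLast? = some v

/-- `r` is a root of `T` if there is exactly one directed path from `r`
to every other vertex of `T`. -/
def IsRoot (T : FinDigraph V) (r : V) : Prop :=
  r ∈ T.verts ∧ ∀ v ∈ T.verts, v ≠ r → ∃! l : List V, T.IsPath r v l

/-- `Υ(T)`: the set of roots of `T`. -/
def roots (T : FinDigraph V) : Set V := {r | T.IsRoot r}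

/-- A leaf: a vertex of `T` without out-neighbors in `T`. -/
def IsLeaf (T : FinDigraph V) (v : V) : Prop := v ∈ T.verts ∧ T.outNbrs v = ∅

/-- The edges of `E` outgoing from `j`. -/
def outEdges (E : Finset (V × V)) (j : V) : Finset (V × V) := E.filter fun e => e.1 = j

/-- The edges of `E` incoming to (ending at) `j`. -/
def inEdges (E : Finset (V × V)) (j : V) : Finset (V × V) := E.filter fun e => e.2 = j

/-- Two pseudotrees are disjoint if (1) they share no edges and (2) for every
vertex of their union, all outgoing edges (within the union of the edge sets)
belong to one and the same pseudotree. -/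
def DisjointPTrees (T1 T2 : FinDigraph V) : Prop :=
  T1.edges ∩ T2.edges = ∅ ∧
  ∀ j ∈ T1.verts ∪ T2.verts,
    outEdges (T1.edges ∪ T2.edges) j ⊆ T1.edges ∨
    outEdges (T1.edges ∪ T2.edges) j ⊆ T2.edges

/-- Two anti-pseudotrees are disjoint if they share no edges and, for every
vertex of their union, all incoming edges of that vertex are in a single one
of the two anti-pseudotrees. -/
def DisjointAntiPTrees (T1 T2 : FinDigraph V) : Prop :=
  T1.edges ∩ T2.edges = ∅ ∧
  ∀ j ∈ T1.verts ∪ T2.verts,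
    inEdges (T1.edges ∪ T2.edges) j ⊆ T1.edges ∨
    inEdges (T1.edges ∪ T2.edges) j ⊆ T2.edges

/-- The union of two digraphs. -/
def union (T1 T2 : FinDigraph V) : FinDigraph V where
  verts := T1.verts ∪ T2.verts
  edges := T1.edges ∪ T2.edges
  mem_fst := fun e he => by
    rcases Finset.mem_union.mp he with h | h
    · exact Finset.mem_union_left _ (T1.mem_fst e h)
    · exact Finset.mem_union_right _ (T2.mem_fst e h)
  mem_snd := fun e he => by
    rcases Finset.mem_union.mp he with h | h
    · exact Finset.mem_union_left _ (T1.mem_snd e h)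
    · exact Finset.mem_union_right _ (T2.mem_snd e h)
  no_loops := fun e he => by
    rcases Finset.mem_union.mp he with h | h
    · exact T1.no_loops e h
    · exact T2.no_loops e h

/-- `T1` is mergeable to `T2`: they are disjoint pseudotrees sharing a vertex,
their union graph is a pseudotree, and there is a directed path (in the union)
from every root of `T2` to every vertex of `T1`. -/
def Mergeable (T1 T2 : FinDigraph V) : Prop :=
  DisjointPTrees T1 T2 ∧ (T1.verts ∩ T2.verts).Nonempty ∧
  IsPseudotree (union T1 T2) ∧
  ∀ r ∈ roots T2, ∀ v ∈ T1.verts, ∃ l : List V, (union T1 T2).IsPath r v l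

/-- The minimal star pseudotree rooted at `j`: vertex `j` together with all its
out-neighbors in `G`, and all the edges of `G` outgoing from `j`. -/
def star (G : FinDigraph V) (j : V) : FinDigraph V where
  verts := insert j (G.outNbrs j)
  edges := G.edges.filter fun e => e.1 = j
  mem_fst := fun e he => by
    have h := Finset.mem_filter.mp he
    simp [h.2]
  mem_snd := fun e he => by
    have h := Finset.mem_filter.mp he
    have h2 : e.2 ∈ G.outNbrs j := by
      refine Finset.mem_filter.mpr ⟨G.mem_snd e h.1, ?_⟩
      have he' : e = (j, e.2) := by
        obtain ⟨a, b⟩ := e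
        simp only at h ⊢
        rw [h.2]
      rw [← he']
      exact h.1
    exact Finset.mem_insert_of_mem h2
  no_loops := fun e he => G.no_loops e (Finset.mem_filter.mp he).1

/-- The minimal anti-star rooted at `j`: vertex `j` together with all its
in-neighbors in `G`, and all the edges of `G` incoming to `j`. -/
def antiStar (G : FinDigraph V) (j : V) : FinDigraph V where
  verts := insert j (G.inNbrs j)
  edges := G.edges.filter fun e => e.2 = j
  mem_fst := fun e he => by
    have h := Finset.mem_filter.mp he
    have h2 : e.1 ∈ G.inNbrs j := by
      refine Finset.mem_filter.mpr ⟨G.mem_fst e h.1, ?_⟩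
      have he' : e = (e.1, j) := by
        obtain ⟨a, b⟩ := e
        simp only at h ⊢
        rw [h.2]
      rw [← he']
      exact h.1
    exact Finset.mem_insert_of_mem h2
  mem_snd := fun e he => by
    have h := Finset.mem_filter.mp he
    simp [h.2]
  no_loops := fun e he => G.no_loops e (Finset.mem_filter.mp he).1

end FinDigraph

/-- The three-element set `𝕄 = {1, 0, ∅}`. -/
inductive MSym : Type
  | one
  | zero
  | emp
deriving DecidableEq

/-- The commutative operator `⊙` on `𝕄`:
`1⊙1 = 1`, `1⊙0 = 0`, `1⊙∅ = 1`, `0⊙0 = 0`, `∅⊙0 = 0`, `∅⊙∅ = ∅`. -/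
def modot : MSym → MSym → MSym
  | .zero, _ => .zero
  | _, .zero => .zero
  | .one, _ => .one
  | _, .one => .one
  | .emp, .emp => .emp

open Classical in
/-- The characteristic matrix of a (disjoint pseudotree) covering `T`:
entry `(i,j)` is `1` if `T i` is mergeable to `T j`, `∅` if they share no
vertices, and `0` otherwise. -/
noncomputable def charMat {V : Type*} [DecidableEq V] {ι : Type*} (T : ι → FinDigraph V) :
    ι → ι → MSym := fun i j =>
  if FinDigraph.Mergeable (T i) (T j) then .one
  else if (T i).verts ∩ (T j).verts = ∅ then .emp
  else .zero

/-- The reduction `F(M, i, j)`: replace row `j` by (row `i`) ⊙ (row `j`),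
replace column `j` by (column `i`) ⊙ (column `j`), then delete row and
column `i`. -/
def reduceF {n : ℕ} (M : Fin n → Fin n → MSym) (i j : Fin n) :
    {k : Fin n // k ≠ i} → {k : Fin n // k ≠ i} → MSym := fun a b =>
  let M1 : Fin n → Fin n → MSym := fun p q => if p = j then modot (M i q) (M j q) else M p q
  let M2 : Fin n → Fin n → MSym := fun p q => if q = j then modot (M1 p i) (M1 p j) else M1 p q
  M2 a.val b.val


section ListHelpers

variable {V : Type*}

lemma reach_mem' {R : V → V → Prop} {D : Set V} (hcl : ∀ x y, x ∈ D → R x y → y ∈ D)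
    {a b : V} (h : Relation.ReflTransGen R a b) (ha : a ∈ D) : b ∈ D := by
  induction h with
  | refl => exact ha
  | tail _ hr ih => exact hcl _ _ ih hr

lemma chain_reach' {R : V → V → Prop} : ∀ (l : List V), l.Chain' R → ∀ a b, l.head? = some a →
    l.getLast? = some b → Relation.ReflTransGen R a b
  | [], _, a, b, h, _ => by simp at h
  | [x], _, a, b, ha, hb => by
      simp at ha hb; subst ha; subst hb; exact Relation.ReflTransGen.refl
  | x :: y :: t, hc, a, b, ha, hb => by
      simp only [List.head?_cons, Option.some.injEq] at ha
      subst ha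
      exact Relation.ReflTransGen.head (List.isChain_cons_cons.mp hc).1
        (chain_reach' (y :: t) (List.isChain_cons_cons.mp hc).2 y b rfl
          (by rw [← hb]; exact (List.getLast?_cons_cons ..).symm))

lemma reach_chain {R : V → V → Prop} {a b : V} (h : Relation.ReflTransGen R a b) :
    ∃ l : List V, l.Chain' R ∧ l.head? = some a ∧ l.getLast? = some b := by
  induction h with
  | refl => exact ⟨[a], List.isChain_singleton a, by simp⟩
  | @tail c d h hr ih =>
    obtain ⟨l, hc, hh, hl⟩ := ih
    have hne : l ≠ [] := by rintro rfl; simp at hh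
    refine ⟨l ++ [d], ?_, ?_, ?_⟩
    · rw [List.Chain', List.isChain_append]
      exact ⟨hc, List.isChain_singleton d, by
        intro x hx y hy
        simp at hy; subst hy
        rw [hl] at hx; simp at hx; subst hx; exact hr⟩
    · rw [List.head?_append_of_ne_nil _ hne]; exact hh
    · simp

lemma reach_chain_nodup {R : V → V → Prop} {a b : V} (h : Relation.ReflTransGen R a b) :
    ∃ l : List V, l.Chain' R ∧ l.Nodup ∧ l.head? = some a ∧ l.getLast? = some b := by
  induction h with
  | refl => exact ⟨[a], List.isChain_singleton a, by simp⟩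
  | @tail c d h hr ih =>
    obtain ⟨l, hc, hnd, hh, hl⟩ := ih
    have hne : l ≠ [] := by rintro rfl; simp at hh
    by_cases hd : d ∈ l
    · obtain ⟨s, t, rfl⟩ := List.append_of_mem hd
      have hpre : (s ++ [d]) <+: (s ++ d :: t) := ⟨t, by simp⟩
      refine ⟨s ++ [d], hc.prefix hpre, hnd.sublist hpre.sublist, ?_, by simp⟩
      rcases s with _ | ⟨x, s'⟩
      · simp at hh ⊢; exact hh
      · simpa using (by simpa using hh : x = a)
    · refine ⟨l ++ [d], ?_, ?_, ?_, by simp⟩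
      · rw [List.Chain', List.isChain_append]
        exact ⟨hc, List.isChain_singleton d, by
          intro x hx y hy
          simp at hy; subst hy
          rw [hl] at hx; simp at hx; subst hx; exact hr⟩
      · simp [List.nodup_append, hnd, hd]
        intro x hx hxd; exact hd (hxd ▸ hx)
      · rw [List.head?_append_of_ne_nil _ hne]; exact hh

lemma chain_mem_left {R : V → V → Prop} {D : Set V} (hcl : ∀ x y, x ∈ D → R x y → y ∈ D) :
    ∀ (l : List V), l.Chain' R → ∀ a, l.head? = some a → a ∈ D →
      l.Chain' (fun x y => R x y ∧ x ∈ D)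
  | [], _, a, _, _ => List.isChain_nil
  | [x], _, a, _, _ => List.isChain_singleton x
  | x :: y :: t, hc, a, ha, haD => by
      simp only [List.head?_cons, Option.some.injEq] at ha
      subst ha
      have h1 := (List.isChain_cons_cons.mp hc).1
      exact List.isChain_cons_cons.mpr ⟨⟨h1, haD⟩,
        chain_mem_left hcl (y :: t) (List.isChain_cons_cons.mp hc).2 y rfl (hcl _ _ haD h1)⟩

lemma chain_not_mem {R : V → V → Prop} {D : Set V} (hcl : ∀ x y, x ∈ D → R x y → y ∈ D) :
    ∀ (l : List V), l.Chain' R → ∀ b, l.getLast? = some b → b ∉ D →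
      l.Chain' (fun x y => R x y ∧ x ∉ D)
  | [], _, b, _, _ => List.isChain_nil
  | [x], _, b, _, _ => List.isChain_singleton x
  | x :: y :: t, hc, b, hb, hbD => by
      have hb' : (y :: t).getLast? = some b := by
        rw [← hb]; exact (List.getLast?_cons_cons ..).symm
      have ih := chain_not_mem hcl (y :: t) (List.isChain_cons_cons.mp hc).2 b hb' hbD
      refine List.isChain_cons_cons.mpr ⟨⟨(List.isChain_cons_cons.mp hc).1, fun hxD => ?_⟩, ih⟩
      exact hbD (reach_mem' hcl (chain_reach' (y :: t) (List.isChain_cons_cons.mp hc).2 y b rfl hb')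
        (hcl _ _ hxD (List.isChain_cons_cons.mp hc).1))

lemma chain_ne_head {R : V → V → Prop} :
    ∀ (l : List V), l.Chain' R → ∀ a, a ∉ l.tail → l.Chain' (fun x y => R x y ∧ y ≠ a)
  | [], _, a, _ => List.isChain_nil
  | [x], _, a, _ => List.isChain_singleton x
  | x :: y :: t, hc, a, ha => by
      simp only [List.tail_cons, List.mem_cons, not_or] at ha
      exact List.isChain_cons_cons.mpr ⟨⟨(List.isChain_cons_cons.mp hc).1, fun h => ha.1 h.symm⟩,
        chain_ne_head (y :: t) (List.isChain_cons_cons.mp hc).2 a (by simpa using ha.2)⟩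

lemma chain_head_rel {R : V → V → Prop} {l : List V} (hc : l.Chain' R) {a b : V}
    (ha : l.head? = some a) (hb : l.getLast? = some b) (hne : a ≠ b) : ∃ c, R a c := by
  match l with
  | [] => simp at ha
  | [x] => simp at ha hb; subst ha; subst hb; exact absurd rfl hne
  | x :: y :: t =>
    simp only [List.head?_cons, Option.some.injEq] at ha
    subst ha
    exact ⟨y, (List.isChain_cons_cons.mp hc).1⟩

lemma chain_last_rel {R : V → V → Prop} :
    ∀ (l : List V), l.Chain' R → ∀ a b, l.head? = some a → l.getLast? = some b → a ≠ b →
      ∃ c, R c b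
  | [], _, a, b, ha, _, _ => by simp at ha
  | [x], _, a, b, ha, hb, hne => by simp at ha hb; subst ha; subst hb; exact absurd rfl hne
  | x :: y :: t, hc, a, b, ha, hb, hne => by
      have hb' : (y :: t).getLast? = some b := by
        rw [← hb]; exact (List.getLast?_cons_cons ..).symm
      by_cases hyb : y = b
      · subst hyb; exact ⟨x, (List.isChain_cons_cons.mp hc).1⟩
      · exact chain_last_rel (y :: t) (List.isChain_cons_cons.mp hc).2 y b rfl hb' hyb

lemma path_unique_aux {R : V → V → Prop} (hpu : ∀ {x y v : V}, R x v → R y v → x = y) :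
    ∀ (n : ℕ) (l1 l2 : List V), l1.length ≤ n → l1 ≠ [] → l2 ≠ [] →
      l1.Chain' R → l1.Nodup → l2.Chain' R → l2.Nodup →
      l1.head? = l2.head? → l1.getLast? = l2.getLast? → l1 = l2 := by
  intro n
  induction n with
  | zero =>
    intro l1 l2 hlen hne1 _ _ _ _ _ _ _
    exact absurd (List.eq_nil_of_length_eq_zero (Nat.le_zero.mp hlen)) hne1
  | succ n ih =>
    intro l1 l2 hlen hne1 hne2 hc1 hnd1 hc2 hnd2 hh hl
    obtain ⟨d1, x1, rfl⟩ : ∃ d x, l1 = d ++ [x] := ⟨l1.dropLast, l1.getLast hne1,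
      (List.dropLast_append_getLast hne1).symm⟩
    obtain ⟨d2, x2, rfl⟩ : ∃ d x, l2 = d ++ [x] := ⟨l2.dropLast, l2.getLast hne2,
      (List.dropLast_append_getLast hne2).symm⟩
    obtain rfl : x1 = x2 := by simpa using hl
    rcases eq_or_ne d1 [] with rfl | hd1
    · rcases d2 with _ | ⟨y, t⟩
      · rfl
      · simp only [List.nil_append, List.cons_append, List.head?_cons] at hh
        obtain rfl : x1 = y := by simpa using hh
        exfalso
        have : x1 ∈ t ++ [x1] := by simp
        simp only [List.cons_append, List.nodup_cons] at hnd2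
        exact hnd2.1 this
    · rcases eq_or_ne d2 [] with rfl | hd2
      · rcases d1 with _ | ⟨y, t⟩
        · rfl
        · simp only [List.nil_append, List.cons_append, List.head?_cons] at hh
          obtain rfl : y = x1 := by simpa using hh
          exfalso
          have : y ∈ t ++ [y] := by simp
          simp only [List.cons_append, List.nodup_cons] at hnd1
          exact hnd1.1 this
      · have hw1 : R (d1.getLast hd1) x1 := by
          have := (List.isChain_append.mp hc1).2.2
          exact this _ (List.getLast?_eq_getLast hd1 ▸ rfl) _ rfl
        have hw2 : R (d2.getLast hd2) x1 := by
          have := (List.isChain_append.mp hc2).2.2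
          exact this _ (List.getLast?_eq_getLast hd2 ▸ rfl) _ rfl
        have hww : d1.getLast hd1 = d2.getLast hd2 := hpu hw1 hw2
        have hlen' : d1.length ≤ n := by
          have := hlen; simp only [List.length_append, List.length_singleton] at this; omega
        have heq : d1 = d2 := by
          refine ih d1 d2 hlen' hd1 hd2 ((List.isChain_append.mp hc1).1)
            ((List.nodup_append.mp hnd1).1) ((List.isChain_append.mp hc2).1)
            ((List.nodup_append.mp hnd2).1) ?_ ?_
          · rwa [List.head?_append_of_ne_nil _ hd1, List.head?_append_of_ne_nil _ hd2] at hh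
          · rw [List.getLast?_eq_getLast hd1, List.getLast?_eq_getLast hd2, hww]
        rw [heq]

end ListHelpers

namespace FinDigraph

variable {V : Type*} [DecidableEq V]

lemma parent_unique (T : FinDigraph V) (hdeg : ∀ j ∈ T.verts, (T.inNbrs j).card ≤ 1)
    {x y v : V} (hx : (x, v) ∈ T.edges) (hy : (y, v) ∈ T.edges) : x = y := by
  by_contra hne
  have hxv : x ∈ T.inNbrs v := Finset.mem_filter.mpr ⟨T.mem_fst _ hx, hx⟩
  have hyv : y ∈ T.inNbrs v := Finset.mem_filter.mpr ⟨T.mem_fst _ hy, hy⟩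
  have h2 : 1 < (T.inNbrs v).card := Finset.one_lt_card.mpr ⟨x, hxv, y, hyv, hne⟩
  have := hdeg v (T.mem_snd _ hx)
  omega

lemma exists_super_root (T : FinDigraph V) (hcon : T.Connected)
    (hdeg : ∀ j ∈ T.verts, (T.inNbrs j).card ≤ 1) :
    ∃ r ∈ T.verts, ∀ u ∈ T.verts,
      Relation.ReflTransGen (fun a b => (a, b) ∈ T.edges) r u := by
  classical
  set R : V → V → Prop := fun a b => (a, b) ∈ T.edges with hR
  have key : ∀ r ∈ T.verts, (∀ x, (x, r) ∈ T.edges → Relation.ReflTransGen R r x) →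
      ∀ u ∈ T.verts, Relation.ReflTransGen R r u := by
    intro r hrv hback u hu
    have h := hcon.2 r hrv u hu
    clear hu
    induction h with
    | refl => exact Relation.ReflTransGen.refl
    | @tail b c hb hadj ih =>
      rcases hadj with hbc | hcb
      · exact ih.tail hbc
      · rcases Relation.ReflTransGen.cases_tail ih with hbr | ⟨d, hd, hdb⟩
        · exact hback c (hbr ▸ hcb)
        · have : c = d := T.parent_unique hdeg hcb hdb
          exact this ▸ hd
  by_cases hall : ∀ u ∈ T.verts, ∃ x, (x, u) ∈ T.edges
  · choose f hf using hall
    set F : V → V := fun u => if h : u ∈ T.verts then f u h else u with hF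
    obtain ⟨u0, hu0⟩ := hcon.1
    set g : ℕ → V := fun n => F^[n] u0 with hg
    have hgmem : ∀ n, g n ∈ T.verts := by
      intro n
      induction n with
      | zero => exact hu0
      | succ k ihk =>
        have : g (k + 1) = F (g k) := Function.iterate_succ_apply' F k u0
        rw [this, hF]
        simp only [ihk, dif_pos]
        exact T.mem_fst _ (hf (g k) ihk)
    have hgedge : ∀ n, (g (n + 1), g n) ∈ T.edges := by
      intro n
      have : g (n + 1) = F (g n) := Function.iterate_succ_apply' F n u0
      rw [this, hF]
      simp only [hgmem n, dif_pos]
      exact hf (g n) (hgmem n)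
    have hdesc : ∀ i j, i ≤ j → Relation.ReflTransGen R (g j) (g i) := by
      intro i j hij
      induction j, hij using Nat.le_induction with
      | base => exact Relation.ReflTransGen.refl
      | succ k hk ihk => exact Relation.ReflTransGen.head (hgedge k) ihk
    have main : ∀ i j, i < j → g i = g j →
        ∃ r ∈ T.verts, ∀ u ∈ T.verts, Relation.ReflTransGen R r u := by
      intro i j hij heq
      refine ⟨g i, hgmem i, key (g i) (hgmem i) ?_⟩
      intro x hx
      have hpar : x = g (i + 1) := T.parent_unique hdeg hx (hgedge i)
      subst hpar
      have : Relation.ReflTransGen R (g j) (g (i + 1)) := hdesc (i + 1) j hij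
      rwa [heq]
    obtain ⟨i, hi, j, hj, hne, heq⟩ :=
      Finset.exists_ne_map_eq_of_card_lt_of_maps_to
        (s := Finset.range (T.verts.card + 1)) (t := T.verts)
        (by simp) (fun n _ => hgmem n)
    rcases hne.lt_or_gt with h | h
    · exact main i j h heq
    · exact main j i h heq.symm
  · push_neg at hall
    obtain ⟨s, hs, hnone⟩ := hall
    exact ⟨s, hs, key s hs fun x hx => absurd hx (hnone x)⟩

lemma isRoot_of_reach (T : FinDigraph V) (hdeg : ∀ j ∈ T.verts, (T.inNbrs j).card ≤ 1)
    {v : V} (hv : v ∈ T.verts)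
    (hreach : ∀ u ∈ T.verts, Relation.ReflTransGen (fun a b => (a, b) ∈ T.edges) v u) :
    T.IsRoot v := by
  refine ⟨hv, fun u hu hne => ?_⟩
  obtain ⟨l, hc, hnd, hh, hl⟩ := reach_chain_nodup (hreach u hu)
  have hlne : l ≠ [] := by rintro rfl; simp at hh
  refine ⟨l, ⟨hlne, hc, hnd, hh, hl⟩, ?_⟩
  rintro l' ⟨hne', hc', hnd', hh', hl'⟩
  exact path_unique_aux (R := fun a b => (a, b) ∈ T.edges)
    (fun hx hy => T.parent_unique hdeg hx hy) l'.length l' l le_rfl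
    hne' hlne hc' hnd' hc hnd (hh'.trans hh.symm) (hl'.trans hl.symm)

/-- The subgraph of `T` on an edge subset, with vertices the endpoints. -/
def restrict (T : FinDigraph V) (E : Finset (V × V)) (hE : E ⊆ T.edges) : FinDigraph V where
  verts := E.image Prod.fst ∪ E.image Prod.snd
  edges := E
  mem_fst := fun e he => Finset.mem_union_left _ (Finset.mem_image_of_mem _ he)
  mem_snd := fun e he => Finset.mem_union_right _ (Finset.mem_image_of_mem _ he)
  no_loops := fun e he => T.no_loops e (hE he)

lemma restrict_verts_subset (T : FinDigraph V) (E : Finset (V × V)) (hE : E ⊆ T.edges) :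
    (T.restrict E hE).verts ⊆ T.verts := by
  intro x hx
  rcases Finset.mem_union.mp hx with h | h
  · obtain ⟨e, he, rfl⟩ := Finset.mem_image.mp h
    exact T.mem_fst _ (hE he)
  · obtain ⟨e, he, rfl⟩ := Finset.mem_image.mp h
    exact T.mem_snd _ (hE he)

lemma isPseudotree_restrict (T : FinDigraph V) (hT : T.IsPseudotree)
    (E : Finset (V × V)) (hE : E ⊆ T.edges) (v : V) (hne : E.Nonempty)
    (hreach : ∀ e ∈ E, Relation.ReflTransGen
      (fun a b => (a, b) ∈ E ∨ (b, a) ∈ E) v e.1) :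
    (T.restrict E hE).IsPseudotree := by
  set G := T.restrict E hE with hG
  have hAdj : ∀ a b, G.Adj a b ↔ ((a, b) ∈ E ∨ (b, a) ∈ E) := fun a b => Iff.rfl
  have hsym : Symmetric G.Adj := fun a b h => h.elim Or.inr Or.inl
  have hv : ∀ u ∈ G.verts, Relation.ReflTransGen G.Adj v u := by
    intro u hu
    rcases Finset.mem_union.mp hu with h | h
    · obtain ⟨e, he, rfl⟩ := Finset.mem_image.mp h
      exact hreach e he
    · obtain ⟨e, he, rfl⟩ := Finset.mem_image.mp h
      exact (hreach e he).tail (Or.inl he)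
  obtain ⟨e0, he0⟩ := hne
  refine ⟨⟨⟨e0.1, Finset.mem_union_left _ (Finset.mem_image_of_mem _ he0)⟩, ?_⟩, ?_, ?_⟩
  · intro u hu w hw
    exact Relation.ReflTransGen.trans ((@Relation.ReflTransGen.symmetric _ G.Adj ⟨hsym⟩).symm _ _ (hv u hu)) (hv w hw)
  · have h1 : e0.1 ∈ G.verts := Finset.mem_union_left _ (Finset.mem_image_of_mem _ he0)
    have h2 : e0.2 ∈ G.verts := Finset.mem_union_right _ (Finset.mem_image_of_mem _ he0)
    exact Finset.one_lt_card.mpr ⟨e0.1, h1, e0.2, h2, T.no_loops _ (hE he0)⟩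
  · intro j hj
    have hsub : G.inNbrs j ⊆ T.inNbrs j := by
      intro x hx
      have := Finset.mem_filter.mp hx
      exact Finset.mem_filter.mpr ⟨T.restrict_verts_subset E hE this.1, hE this.2⟩
    exact le_trans (Finset.card_le_card hsub) (hT.2.2 j (T.restrict_verts_subset E hE hj))

lemma split (T : FinDigraph V) (hT : T.IsPseudotree) (D : Set V) (va vb : V)
    (hEa : ∃ e ∈ T.edges, e.1 ∈ D) (hEb : ∃ e ∈ T.edges, e.1 ∉ D)
    (hra : ∀ e ∈ T.edges, e.1 ∈ D → Relation.ReflTransGen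
      (fun a b => ((a, b) ∈ T.edges ∧ a ∈ D) ∨ ((b, a) ∈ T.edges ∧ b ∈ D)) va e.1)
    (hrb : ∀ e ∈ T.edges, e.1 ∉ D → Relation.ReflTransGen
      (fun a b => ((a, b) ∈ T.edges ∧ a ∉ D) ∨ ((b, a) ∈ T.edges ∧ b ∉ D)) vb e.1) :
    ∃ Ta Tb : FinDigraph V,
      Ta.IsPseudotree ∧ Tb.IsPseudotree ∧
      Ta.IsSubgraph T ∧ Tb.IsSubgraph T ∧
      FinDigraph.DisjointPTrees Ta Tb ∧
      Ta.edges ∪ Tb.edges = T.edges ∧ Ta.edges ∩ Tb.edges = ∅ ∧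
      ∀ T' : FinDigraph V, T'.IsPseudotree → FinDigraph.DisjointPTrees T T' →
        FinDigraph.DisjointPTrees Ta T' ∧ FinDigraph.DisjointPTrees Tb T' := by
  classical
  set Ea : Finset (V × V) := T.edges.filter (fun e => e.1 ∈ D) with hEadef
  set Eb : Finset (V × V) := T.edges.filter (fun e => e.1 ∉ D) with hEbdef
  have hEamem : ∀ e, e ∈ Ea ↔ (e ∈ T.edges ∧ e.1 ∈ D) := fun e => Finset.mem_filter
  have hEbmem : ∀ e, e ∈ Eb ↔ (e ∈ T.edges ∧ e.1 ∉ D) := fun e => Finset.mem_filter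
  have hEasub : Ea ⊆ T.edges := Finset.filter_subset _ _
  have hEbsub : Eb ⊆ T.edges := Finset.filter_subset _ _
  set Ta := T.restrict Ea hEasub with hTa
  set Tb := T.restrict Eb hEbsub with hTb
  have hTaP : Ta.IsPseudotree := by
    obtain ⟨e, he, heD⟩ := hEa
    refine T.isPseudotree_restrict hT Ea hEasub va ⟨e, (hEamem e).mpr ⟨he, heD⟩⟩ ?_
    intro e' he'
    obtain ⟨he'T, he'D⟩ := (hEamem e').mp he'
    refine Relation.ReflTransGen.mono ?_ _ _ (hra e' he'T he'D)
    rintro a b (⟨h1, h2⟩ | ⟨h1, h2⟩)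
    · exact Or.inl ((hEamem _).mpr ⟨h1, h2⟩)
    · exact Or.inr ((hEamem _).mpr ⟨h1, h2⟩)
  have hTbP : Tb.IsPseudotree := by
    obtain ⟨e, he, heD⟩ := hEb
    refine T.isPseudotree_restrict hT Eb hEbsub vb ⟨e, (hEbmem e).mpr ⟨he, heD⟩⟩ ?_
    intro e' he'
    obtain ⟨he'T, he'D⟩ := (hEbmem e').mp he'
    refine Relation.ReflTransGen.mono ?_ _ _ (hrb e' he'T he'D)
    rintro a b (⟨h1, h2⟩ | ⟨h1, h2⟩)
    · exact Or.inl ((hEbmem _).mpr ⟨h1, h2⟩)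
    · exact Or.inr ((hEbmem _).mpr ⟨h1, h2⟩)
  have hTaedges : Ta.edges = Ea := rfl
  have hTbedges : Tb.edges = Eb := rfl
  have hdisjoint : Ta.edges ∩ Tb.edges = ∅ := by
    ext e
    simp only [Finset.mem_inter, hTaedges, hTbedges, hEamem, hEbmem, Finset.notMem_empty,
      iff_false]
    tauto
  have hunion : Ta.edges ∪ Tb.edges = T.edges := by
    ext e
    simp only [Finset.mem_union, hTaedges, hTbedges, hEamem, hEbmem]
    tauto
  refine ⟨Ta, Tb, hTaP, hTbP,
    ⟨T.restrict_verts_subset _ _, hEasub⟩, ⟨T.restrict_verts_subset _ _, hEbsub⟩,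
    ⟨hdisjoint, ?_⟩, hunion, hdisjoint, ?_⟩
  · intro j hj
    by_cases hD : j ∈ D
    · left
      intro e he
      obtain ⟨heu, hej⟩ := Finset.mem_filter.mp he
      rcases Finset.mem_union.mp heu with h | h
      · exact h
      · exact absurd (hej ▸ hD) ((hEbmem e).mp h).2
    · right
      intro e he
      obtain ⟨heu, hej⟩ := Finset.mem_filter.mp he
      rcases Finset.mem_union.mp heu with h | h
      · exact absurd (hej ▸ hD) (fun hc => hc ((hEamem e).mp h).2)
      · exact h
  · intro T' hT'P ⟨hd1, hd2⟩
    have main : ∀ (S : FinDigraph V), S.edges ⊆ T.edges → S.verts ⊆ T.verts →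
        FinDigraph.DisjointPTrees S T' := by
      intro S hSe hSv
      constructor
      · ext e
        simp only [Finset.mem_inter, Finset.notMem_empty, iff_false]
        rintro ⟨h1, h2⟩
        have : e ∈ T.edges ∩ T'.edges := Finset.mem_inter.mpr ⟨hSe h1, h2⟩
        rw [hd1] at this
        exact absurd this (Finset.notMem_empty e)
      · intro j hj
        have hj' : j ∈ T.verts ∪ T'.verts := by
          rcases Finset.mem_union.mp hj with h | h
          · exact Finset.mem_union_left _ (hSv h)
          · exact Finset.mem_union_right _ h
        rcases hd2 j hj' with hc | hc
        · left
          intro e he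
          obtain ⟨heu, hej⟩ := Finset.mem_filter.mp he
          rcases Finset.mem_union.mp heu with h | h
          · exact h
          · exfalso
            have heT : e ∈ T.edges := hc (Finset.mem_filter.mpr
              ⟨Finset.mem_union_right _ h, hej⟩)
            have : e ∈ T.edges ∩ T'.edges := Finset.mem_inter.mpr ⟨heT, h⟩
            rw [hd1] at this
            exact absurd this (Finset.notMem_empty e)
        · right
          intro e he
          obtain ⟨heu, hej⟩ := Finset.mem_filter.mp he
          rcases Finset.mem_union.mp heu with h | h
          · exact hc (Finset.mem_filter.mpr ⟨Finset.mem_union_left _ (hSe h), hej⟩)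
          · exact h
    exact ⟨main Ta hEasub (T.restrict_verts_subset _ _),
      main Tb hEbsub (T.restrict_verts_subset _ _)⟩

end FinDigraph

/-- a pseudotree with an internal vertex (a vertex that is neither a
root nor a leaf) or with at least two roots can be decomposed into two disjoint
pseudotrees whose edge sets partition its edges; moreover the two pieces remain
disjoint from any pseudotree that was disjoint from the original one. -/
theorem statement_4 {V : Type*} [DecidableEq V] (T : FinDigraph V)
    (hT : T.IsPseudotree)
    (h : (∃ v ∈ T.verts, ¬ T.IsRoot v ∧ T.outNbrs v ≠ ∅) ∨ 2 ≤ T.roots.ncard) :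
    ∃ Ta Tb : FinDigraph V,
      Ta.IsPseudotree ∧ Tb.IsPseudotree ∧
      Ta.IsSubgraph T ∧ Tb.IsSubgraph T ∧
      FinDigraph.DisjointPTrees Ta Tb ∧
      Ta.edges ∪ Tb.edges = T.edges ∧ Ta.edges ∩ Tb.edges = ∅ ∧
      ∀ T' : FinDigraph V, T'.IsPseudotree → FinDigraph.DisjointPTrees T T' →
        FinDigraph.DisjointPTrees Ta T' ∧ FinDigraph.DisjointPTrees Tb T' := by
  classical
  rcases h with ⟨v, hv, hnroot, hout⟩ | hroots
  · -- internal vertex case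
    obtain ⟨w, hw⟩ : ∃ w, (v, w) ∈ T.edges := by
      obtain ⟨w, hw⟩ := Finset.nonempty_iff_ne_empty.mpr hout
      exact ⟨w, (Finset.mem_filter.mp hw).2⟩
    set R : V → V → Prop := fun a b => (a, b) ∈ T.edges with hR
    set D : Set V := {u | Relation.ReflTransGen R v u} with hD
    have hDcl : ∀ x y, x ∈ D → R x y → y ∈ D := fun x y hx hxy =>
      Relation.ReflTransGen.tail hx hxy
    obtain ⟨r, hrv, hr⟩ := T.exists_super_root hT.1 hT.2.2
    by_cases hrD : r ∈ D
    · exfalso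
      apply hnroot
      apply T.isRoot_of_reach hT.2.2 hv
      intro u hu
      exact Relation.ReflTransGen.trans hrD (hr u hu)
    · apply T.split hT D v r
      · exact ⟨(v, w), hw, Relation.ReflTransGen.refl⟩
      · have h2 : 1 < T.verts.card := hT.2.1
        obtain ⟨u, hu, hune⟩ := Finset.exists_mem_ne h2 r
        rcases Relation.ReflTransGen.cases_head (hr u hu) with heq | ⟨c, hc, _⟩
        · exact absurd heq.symm hune
        · exact ⟨(r, c), hc, hrD⟩
      · intro e he heD
        obtain ⟨l, hc, hh, hl⟩ := reach_chain heD
        have hc2 := chain_mem_left hDcl l hc v hh Relation.ReflTransGen.refl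
        exact chain_reach' l (hc2.imp fun _ _ h => Or.inl ⟨h.1, h.2⟩) v e.1 hh hl
      · intro e he heD
        obtain ⟨l, hc, hh, hl⟩ := reach_chain (hr e.1 (T.mem_fst e he))
        have hc2 := chain_not_mem hDcl l hc e.1 hl heD
        exact chain_reach' l (hc2.imp fun _ _ h => Or.inl ⟨h.1, h.2⟩) r e.1 hh hl
  · -- two roots case
    have hfin : T.roots.Finite := Set.Finite.subset T.verts.finite_toSet fun r hr => hr.1
    obtain ⟨r1, r2, hr1, hr2, hne⟩ := (Set.one_lt_ncard_iff hfin).mp hroots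
    have hr1v : r1 ∈ T.verts := hr1.1
    have hr2v : r2 ∈ T.verts := hr2.1
    obtain ⟨l0, ⟨hl0ne, hc0, hnd0, hh0, hl0⟩, -⟩ := hr2.2 r1 hr1v hne
    obtain ⟨p1, hp1⟩ : ∃ c, (c, r1) ∈ T.edges := by
      obtain ⟨c, hc⟩ := chain_last_rel l0 hc0 r2 r1 hh0 hl0 (Ne.symm hne)
      exact ⟨c, hc⟩
    set R0 : V → V → Prop := fun a b => (a, b) ∈ T.edges ∧ b ≠ r1 with hR0
    set D : Set V := {u | Relation.ReflTransGen R0 p1 u} with hD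
    have hD0cl : ∀ x y, x ∈ D → R0 x y → y ∈ D := fun x y hx hxy =>
      Relation.ReflTransGen.tail hx hxy
    have hr1D : r1 ∉ D := by
      intro hmem
      rcases Relation.ReflTransGen.cases_tail hmem with heq | ⟨c, _, hcr⟩
      · exact T.no_loops (p1, r1) hp1 heq.symm
      · exact hcr.2 rfl
    apply T.split hT D p1 r1
    · exact ⟨(p1, r1), hp1, Relation.ReflTransGen.refl⟩
    · obtain ⟨l2, ⟨hl2ne, hc2, hnd2, hh2, hl2⟩, -⟩ := hr1.2 r2 hr2v (Ne.symm hne)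
      obtain ⟨c, hcr⟩ := chain_head_rel hc2 hh2 hl2 (Ne.symm hne).symm
      exact ⟨(r1, c), hcr, hr1D⟩
    · intro e he heD
      obtain ⟨l, hc, hh, hl⟩ := reach_chain heD
      have hc2 := chain_mem_left hD0cl l hc p1 hh Relation.ReflTransGen.refl
      exact chain_reach' l (hc2.imp fun _ _ h => Or.inl ⟨h.1.1, h.2⟩) p1 e.1 hh hl
    · intro e he heD
      by_cases h1 : e.1 = r1
      · rw [h1]
      · obtain ⟨l, ⟨hlne, hc, hnd, hh, hl⟩, -⟩ := hr1.2 e.1 (T.mem_fst e he) h1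
        have hr1tail : r1 ∉ l.tail := by
          rcases l with _ | ⟨x, t⟩
          · simp at hh
          · obtain rfl : x = r1 := by simpa using hh
            simpa using (List.nodup_cons.mp hnd).1
        have hcR0 : l.Chain' R0 := (chain_ne_head l hc r1 hr1tail).imp fun _ _ h => ⟨h.1, h.2⟩
        have hc2 := chain_not_mem hD0cl l hcR0 e.1 hl heD
        exact chain_reach' l (hc2.imp fun _ _ h => Or.inl ⟨h.1.1, h.2⟩) r1 e.1 hh hl
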